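/- Let X be a normal proper variety and let P, D be big ℝ-divisors with P movable and P ≤ D (i.e., D − P effective). Then P ≤ P_σ(D). -/

import Mathlib

/-- An abstract model of the divisor theory of a proper normal algebraic variety
over a field `k`.  `K` is the function field, `Prime` is the set of prime (Weil)
divisors, and `ord Γ f` is the order of vanishing of the rational function `f`
along the prime divisor `Γ`. -/
structure NormalProperVariety (k : Type) [Field k] where
  /-- The function field `K(X)`. -/
  K : Type
  [fieldK : Field K]
  [algK : Algebra k K]
  /-- The set of prime (Weil) divisors on `X`. -/
  Prime : Type
  /-- `ord Γ f` is the order of vanishing of `f` along `Γ`. -/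
  ord : Prime → K → ℤ
  ord_mul : ∀ (Γ : Prime) {f g : K}, f ≠ 0 → g ≠ 0 →
      ord Γ (f * g) = ord Γ f + ord Γ g
  ord_add : ∀ (Γ : Prime) {f g : K}, f ≠ 0 → g ≠ 0 → f + g ≠ 0 →
      min (ord Γ f) (ord Γ g) ≤ ord Γ (f + g)
  ord_const : ∀ (Γ : Prime) (c : k), c ≠ 0 → ord Γ (algebraMap k K c) = 0
  finite_ord : ∀ {f : K}, f ≠ 0 → {Γ : Prime | ord Γ f ≠ 0}.Finite

attribute [instance] NormalProperVariety.fieldK NormalProperVariety.algK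

namespace NormalProperVariety

variable {k : Type} [Field k] (X : NormalProperVariety k)

open Classical

/-- ℝ-divisors on `X`: finite formal `ℝ`-linear combinations of prime divisors. -/
abbrev Div : Type := X.Prime →₀ ℝ

/-- The divisor `div(f)` of a rational function (by convention `0` for `f = 0`). -/
noncomputable def divOf (f : X.K) : X.Div :=
  if hf : f = 0 then 0
  else Finsupp.ofSupportFinite (fun Γ => (X.ord Γ f : ℝ))
    (Set.Finite.subset (X.finite_ord hf) (by
      intro Γ hΓ
      simp only [Function.mem_support, ne_eq, Int.cast_eq_zero] at hΓ
      exact hΓ))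

/-- The set of principal divisors `div(f)`, `f ∈ K(X)*`. -/
def Principal : Set X.Div := {D | ∃ f : X.K, f ≠ 0 ∧ D = X.divOf f}

/-- `ℝ`-linear equivalence: `D - D' = Σ aᵢ div(fᵢ)` with `aᵢ ∈ ℝ`. -/
def REquiv (D D' : X.Div) : Prop := D - D' ∈ Submodule.span ℝ X.Principal

/-- `ℚ`-linear equivalence: `D - D' = Σ aᵢ div(fᵢ)` with `aᵢ ∈ ℚ`. -/
def QEquiv (D D' : X.Div) : Prop := D - D' ∈ Submodule.span ℚ X.Principal

/-- `ℤ`-linear equivalence: `D - D' = div(f)`. -/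
def ZEquiv (D D' : X.Div) : Prop := ∃ f : X.K, f ≠ 0 ∧ D - D' = X.divOf f

/-- `H⁰(X, 𝒪_X(D)) = H⁰(X, 𝒪_X(⌊D⌋))` as a subset of the function field, namely
`{f ∈ K(X)* : div(f) + D ≥ 0} ∪ {0}`.  (Since `ord` takes integer values,
replacing `D` by its round-down `⌊D⌋` does not change this set.) -/
def H0 (D : X.Div) : Set X.K :=
  {f : X.K | f = 0 ∨ ∀ Γ : X.Prime, 0 ≤ (X.ord Γ f : ℝ) + D Γ}

/-- `h⁰(D) = dim_k H⁰(X, 𝒪_X(⌊D⌋))`. -/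
noncomputable def h0 (D : X.Div) : ℕ := Set.finrank k (X.H0 D)

/-- The volume `vol(D) = limsup_{m → ∞} h⁰(mD) / (mⁿ / n!)`, where `n = dim X`. -/
noncomputable def vol (n : ℕ) (D : X.Div) : ℝ :=
  Filter.limsup (fun m : ℝ => (X.h0 (m • D) : ℝ) * (n.factorial : ℝ) / m ^ n)
    Filter.atTop

/-- `D` is big iff `vol(D) > 0` (`n = dim X`). -/
def IsBig (n : ℕ) (D : X.Div) : Prop := 0 < X.vol n D

/-- Nakayama's `σ_Γ(D) = inf { mult_Γ D' : D' ∼_ℝ D, D' ≥ 0 }`. -/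
noncomputable def sigma (D : X.Div) (Γ : X.Prime) : ℝ :=
  sInf {t : ℝ | ∃ D' : X.Div, X.REquiv D' D ∧ 0 ≤ D' ∧ t = D' Γ}

/-- The negative part `N_σ(D) = Σ_Γ σ_Γ(D) · Γ` of the divisorial Zariski
decomposition (by convention `0` in the degenerate case where infinitely many of
the `σ_Γ(D)` are nonzero). -/
noncomputable def Nsigma (D : X.Div) : X.Div :=
  if h : (Function.support fun Γ => X.sigma D Γ).Finite then
    Finsupp.ofSupportFinite _ h
  else 0

/-- The positive part `P_σ(D) = D - N_σ(D)`. -/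
noncomputable def Psigma (D : X.Div) : X.Div := D - X.Nsigma D

/-- A big ℝ-divisor is movable if `N_σ(D) = 0`. -/
def Movable (D : X.Div) : Prop := X.Nsigma D = 0

end NormalProperVariety

/-!
If `P' ∼_ℝ P` is effective, then so is `P' + (D - P) ∼_ℝ D`; hence
`σ_Γ(D) ≤ σ_Γ(P) + mult_Γ(D - P) = mult_Γ(D - P)` because `P` is movable, which is
`mult_Γ P ≤ mult_Γ D - σ_Γ(D) = mult_Γ P_σ(D)`. Such a `P'` exists because `P` is big: a divisor
with no effective `ℝ`-equivalent has no nonzero section in any positive multiple, hence volume `0`.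
-/

namespace NormalProperVariety

variable {k : Type} [Field k] (X : NormalProperVariety k)

/-- The set whose infimum is `σ_Γ(D)` is nonempty; otherwise `σ_Γ(D)` is the junk value
`sInf ∅ = 0`. -/
def IsREffective (D : X.Div) : Prop := ∃ D' : X.Div, X.REquiv D' D ∧ 0 ≤ D'

variable {X}

lemma divOf_apply {f : X.K} (hf : f ≠ 0) (Γ : X.Prime) : X.divOf f Γ = X.ord Γ f := by
  rw [divOf, dif_neg hf]
  rfl

lemma REquiv.add_right {D D' : X.Div} (h : X.REquiv D' D) (E : X.Div) :
    X.REquiv (D' + E) (D + E) := by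
  rwa [REquiv, add_sub_add_right_eq_sub]

lemma rEquiv_add_smul_divOf (D : X.Div) (c : ℝ) {f : X.K} (hf : f ≠ 0) :
    X.REquiv (D + c • X.divOf f) D := by
  rw [REquiv, add_sub_cancel_left]
  exact Submodule.smul_mem _ _ (Submodule.subset_span ⟨f, hf, rfl⟩)

/-- A nonzero section `f` of `mD` gives the effective divisor `D + m⁻¹ div(f) ∼_ℝ D`. -/
lemma isREffective_of_mem_H0_smul {D : X.Div} {m : ℝ} (hm : 0 < m) {f : X.K}
    (hf : f ∈ X.H0 (m • D)) (hf0 : f ≠ 0) : X.IsREffective D := by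
  refine ⟨D + m⁻¹ • X.divOf f, rEquiv_add_smul_divOf D m⁻¹ hf0, fun Γ => ?_⟩
  have hΓ : 0 ≤ (X.ord Γ f : ℝ) + m * D Γ := (hf.resolve_left hf0) Γ
  have hexpand : (D + m⁻¹ • X.divOf f) Γ = m⁻¹ * ((X.ord Γ f : ℝ) + m * D Γ) := by
    simp only [Finsupp.coe_add, Finsupp.coe_smul, Pi.add_apply, Pi.smul_apply, smul_eq_mul,
      divOf_apply hf0]
    field_simp
    ring
  rw [Finsupp.coe_zero, Pi.zero_apply, hexpand]
  positivity

lemma h0_smul_eq_zero_of_not_isREffective {D : X.Div} (hD : ¬ X.IsREffective D) {m : ℝ}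
    (hm : 0 < m) : X.h0 (m • D) = 0 := by
  have hsub : X.H0 (m • D) ⊆ {0} := fun f hf =>
    by_contra fun hf0 => hD (isREffective_of_mem_H0_smul hm hf hf0)
  rw [h0, Set.finrank, le_bot_iff.mp ((Submodule.span_mono hsub).trans_eq
    (Submodule.span_zero_singleton k)), finrank_bot]

lemma vol_eq_zero_of_not_isREffective {D : X.Div} (hD : ¬ X.IsREffective D) (n : ℕ) :
    X.vol n D = 0 := by
  have hev : ∀ᶠ m : ℝ in Filter.atTop, (X.h0 (m • D) : ℝ) * n.factorial / m ^ n = 0 := by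
    filter_upwards [Filter.eventually_gt_atTop (0 : ℝ)] with m hm
    simp [h0_smul_eq_zero_of_not_isREffective hD hm]
  rw [vol, Filter.limsup_congr hev, Filter.limsup_const]

lemma IsBig.isREffective {n : ℕ} {D : X.Div} (hD : X.IsBig n D) : X.IsREffective D := by
  by_contra h
  exact hD.ne' (vol_eq_zero_of_not_isREffective h n)

lemma sigma_nonneg (D : X.Div) (Γ : X.Prime) : 0 ≤ X.sigma D Γ :=
  Real.sInf_nonneg (by rintro _ ⟨D', -, hD', rfl⟩; exact hD' Γ)

lemma sigma_le_apply {D D' : X.Div} (h : X.REquiv D' D) (hD' : 0 ≤ D') (Γ : X.Prime) :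
    X.sigma D Γ ≤ D' Γ :=
  csInf_le ⟨0, by rintro _ ⟨D'', -, hD'', rfl⟩; exact hD'' Γ⟩ ⟨D', h, hD', rfl⟩

lemma sigma_eq_zero_of_not_isREffective {D : X.Div} (hD : ¬ X.IsREffective D) (Γ : X.Prime) :
    X.sigma D Γ = 0 := by
  refine (congrArg sInf (Set.eq_empty_of_forall_notMem ?_)).trans Real.sInf_empty
  rintro _ ⟨D', h, hD', rfl⟩
  exact hD ⟨D', h, hD'⟩

/-- `0 ≤ σ_Γ(D) ≤ mult_Γ D'` for any effective `D' ∼_ℝ D`. -/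
lemma sigma_support_finite (D : X.Div) : (Function.support fun Γ => X.sigma D Γ).Finite := by
  by_cases hD : X.IsREffective D
  · obtain ⟨D', h, hD'⟩ := hD
    refine D'.hasFiniteSupport.subset fun Γ hΓ hzero => hΓ ?_
    exact le_antisymm (hzero ▸ sigma_le_apply h hD' Γ) (X.sigma_nonneg D Γ)
  · simp [sigma_eq_zero_of_not_isREffective hD]

lemma Nsigma_apply (D : X.Div) (Γ : X.Prime) : X.Nsigma D Γ = X.sigma D Γ := by
  rw [Nsigma, dif_pos (X.sigma_support_finite D)]
  rfl

lemma Movable.sigma_eq_zero {P : X.Div} (hP : X.Movable P) (Γ : X.Prime) :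
    X.sigma P Γ = 0 := by
  rw [← Nsigma_apply, hP, Finsupp.coe_zero, Pi.zero_apply]

/-- If `P' ∼_ℝ P` is effective then so is `P' + E ∼_ℝ P + E`. -/
lemma sigma_add_le {P E : X.Div} (hP : X.IsREffective P) (hE : 0 ≤ E) (Γ : X.Prime) :
    X.sigma (P + E) Γ ≤ X.sigma P Γ + E Γ := by
  obtain ⟨P₀, hP₀, hP₀_nonneg⟩ := hP
  suffices X.sigma (P + E) Γ - E Γ ≤ X.sigma P Γ by linarith
  refine le_csInf ⟨P₀ Γ, P₀, hP₀, hP₀_nonneg, rfl⟩ ?_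
  rintro _ ⟨P', hP', hP'_nonneg, rfl⟩
  have := sigma_le_apply (hP'.add_right E) (add_nonneg hP'_nonneg hE) Γ
  rw [Finsupp.add_apply] at this
  linarith

end NormalProperVariety

theorem movable_le_psigma_general {k : Type} [Field k] (X : NormalProperVariety k) (n : ℕ)
    (P D : X.Div) (hP : X.IsBig n P)
    (hmov : X.Movable P) (hle : P ≤ D) :
    P ≤ X.Psigma D := by
  intro Γ
  have hσ := X.sigma_add_le hP.isREffective (sub_nonneg.mpr hle) Γ
  rw [add_sub_cancel, hmov.sigma_eq_zero, zero_add, Finsupp.sub_apply] at hσ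
  rw [NormalProperVariety.Psigma, Finsupp.sub_apply, NormalProperVariety.Nsigma_apply]
  linarith

/-- Let `X` be a normal proper variety and `P ≤ D` big ℝ-divisors
with `P` movable.  Then `P ≤ P_σ(D)`. -/
theorem movable_le_psigma {k : Type} [Field k] (X : NormalProperVariety k) (n : ℕ)
    (P D : X.Div) (hP : X.IsBig n P) (hD : X.IsBig n D)
    (hmov : X.Movable P) (hle : P ≤ D) :
    P ≤ X.Psigma D :=
  movable_le_psigma_general X n P D hP hmov hle
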